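/- Let ψ be a structural set and f a C² function from ℝ³ to ℝ_{0,3}. Then the sandwich operator ν(f) = Σᵢ ψⁱ f ψⁱ commutes with the two-sided Dirac operator: ψ∂[ν(f)]ψ∂ = ν(ψ∂ f ψ∂). -/

import Mathlib

noncomputable section

abbrev V3 : Type := Fin 3 → ℝ

/-- The negative-definite quadratic form on `ℝ³`, so that `CliffordAlgebra Q3 = ℝ_{0,3}`. -/
def Q3 : QuadraticForm ℝ V3 := -(QuadraticMap.weightedSumSquares ℝ (fun _ : Fin 3 => (1:ℝ)))

/-- The real Clifford algebra `ℝ_{0,3}`. -/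
abbrev Cl3 : Type := CliffordAlgebra Q3

namespace Cl3

def bCl : Module.Basis (Module.Free.ChooseBasisIndex ℝ Cl3) ℝ Cl3 := Module.Free.chooseBasis ℝ Cl3

def toLp : Cl3 →ₗ[ℝ] lp (fun _ : Module.Free.ChooseBasisIndex ℝ Cl3 => ℝ) ⊤ where
  toFun x := ⟨fun i => bCl.repr x i, by
    apply memℓp_infty
    have h1 : (Set.range ((bCl.repr x) : _ → ℝ)).Finite := by
      apply Set.Finite.subset (((bCl.repr x).frange : Finset ℝ).finite_toSet.insert 0)
      rintro y ⟨i, rfl⟩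
      by_cases h : (bCl.repr x) i = 0
      · simp [h]
      · exact Set.mem_insert_of_mem _ (by
          simp only [Finset.mem_coe, Finsupp.mem_frange]
          exact ⟨h, i, rfl⟩)
    have h2 : (Set.range fun i => ‖(bCl.repr x) i‖).Finite := by
      have := h1.image norm
      apply this.subset
      rintro y ⟨i, rfl⟩
      exact ⟨(bCl.repr x) i, ⟨i, rfl⟩, rfl⟩
    exact h2.bddAbove⟩
  map_add' x y := by ext i; simp <;> rfl
  map_smul' c x := by ext i; simp

lemma toLp_injective : Function.Injective toLp := by
  intro x y h
  apply bCl.repr.injective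
  ext i
  exact congrFun (congrArg Subtype.val h) i

instance : NormedAddCommGroup Cl3 := NormedAddCommGroup.induced Cl3 _ toLp toLp_injective
instance : NormedSpace ℝ Cl3 := NormedSpace.induced ℝ Cl3 _ toLp

end Cl3

/-- Embedding of vectors `ℝ³ ⊂ ℝ_{0,3}`. -/
def ι3 : V3 →ₗ[ℝ] Cl3 := CliffordAlgebra.ι Q3

/-- `ψ` is a structural set: `ψⁱψʲ + ψʲψⁱ = -2δᵢⱼ` inside `ℝ_{0,3}`. -/
def StructuralSet (ψ : Fin 3 → V3) : Prop :=
  ∀ i j, ι3 (ψ i) * ι3 (ψ j) + ι3 (ψ j) * ι3 (ψ i)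
      = algebraMap ℝ Cl3 (if i = j then -2 else 0)

/-- Partial derivative `∂f/∂xᵢ`. -/
def pd (i : Fin 3) (f : V3 → Cl3) : V3 → Cl3 := fun x => fderiv ℝ f x (Pi.single i 1)

/-- Left Dirac operator `ψ∂ f = Σᵢ ψⁱ ∂f/∂xᵢ`. -/
def DL (ψ : Fin 3 → V3) (f : V3 → Cl3) : V3 → Cl3 := fun x => ∑ i, ι3 (ψ i) * pd i f x

/-- Right Dirac operator `f ψ∂ = Σᵢ (∂f/∂xᵢ) ψⁱ`. -/
def DR (ψ : Fin 3 → V3) (f : V3 → Cl3) : V3 → Cl3 := fun x => ∑ i, pd i f x * ι3 (ψ i)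

/-- Two-sided operator `φ∂ f ψ∂ = Σᵢⱼ φⁱ (∂²f/∂xᵢ∂xⱼ) ψʲ`. -/
def DLR (φ ψ : Fin 3 → V3) (f : V3 → Cl3) : V3 → Cl3 :=
  fun x => ∑ i, ∑ j, ι3 (φ i) * pd i (pd j f) x * ι3 (ψ j)

/-- Componentwise Laplacian. -/
def lap (f : V3 → Cl3) : V3 → Cl3 := fun x => ∑ i, pd i (pd i f) x

/-- `ν(a) = Σᵢ ψⁱ a ψⁱ`. -/
def nu (ψ : Fin 3 → V3) (a : Cl3) : Cl3 := ∑ i, ι3 (ψ i) * a * ι3 (ψ i)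

/-- `ω(a) = Σᵢ φⁱ a ψⁱ`. -/
def om (φ ψ : Fin 3 → V3) (a : Cl3) : Cl3 := ∑ i, ι3 (φ i) * a * ι3 (ψ i)

/-- `x_ψ = Σᵢ ψⁱ xᵢ`. -/
def xPsi (ψ : Fin 3 → V3) (x : V3) : Cl3 := ∑ i, x i • ι3 (ψ i)

/-! For a structural family `e`, moving `eᵢ` across `ν(b) = Σₖ eₖ b eₖ` costs a correction:
`eᵢ ν(b) = -ν(eᵢ b) - 2 b eᵢ`, and symmetrically on the right, so
`eᵢ ν(b) eⱼ = ν(eᵢ b eⱼ) + 2 (eⱼ eᵢ b - b eᵢ eⱼ)`. Summed against the symmetric Hessian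
`bᵢⱼ = ∂ᵢ∂ⱼ f`, both correction sums equal `-Σᵢ bᵢᵢ` and cancel. On the analytic side, `ν` is linear
on the finite-dimensional algebra `ℝ_{0,3}`, hence continuous, so it commutes with `∂ᵢ∂ⱼ`. -/

section CliffordFinite

variable {K M : Type*} [Field K] [AddCommGroup M] [Module K M] [FiniteDimensional K M]

lemma exteriorPower_eq_bot_of_finrank_lt {n : ℕ} (hn : Module.finrank K M < n) :
    ⋀[K]^n M = ⊥ := by
  rw [← Submodule.finrank_eq_zero, exteriorPower.finrank_eq, Nat.choose_eq_zero_of_lt hn]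

instance ExteriorAlgebra.instModuleFinite : Module.Finite K (ExteriorAlgebra K M) := by
  rw [Module.finite_def]
  have : ⨆ n : Fin (Module.finrank K M + 1), ⋀[K]^n M = ⊤ := by
    refine eq_top_iff.mpr ?_
    rw [← (ExteriorAlgebra.gradedAlgebra K M).isInternal.submodule_iSup_eq_top]
    refine iSup_le fun n => ?_
    rcases lt_or_ge (Module.finrank K M) n with hn | hn
    · rw [exteriorPower_eq_bot_of_finrank_lt hn]
      exact bot_le
    · exact le_iSup_of_le ⟨n, Nat.lt_succ_of_le hn⟩ le_rfl
  rw [← this]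
  exact Submodule.fg_iSup _ fun n => Module.Finite.iff_fg.mp inferInstance

instance CliffordAlgebra.instModuleFinite [Invertible (2 : K)] (Q : QuadraticForm K M) :
    Module.Finite K (CliffordAlgebra Q) :=
  Module.Finite.equiv (CliffordAlgebra.equivExterior Q).symm

end CliffordFinite

section Sandwich

variable {ι A : Type*}

def IsStructuralFamily [Ring A] [DecidableEq ι] (e : ι → A) : Prop :=
  ∀ i j, e i * e j + e j * e i = if i = j then -2 else 0

variable [Fintype ι]

def sandwich (R : Type*) [CommSemiring R] [Semiring A] [Algebra R A] (e : ι → A) :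
    A →ₗ[R] A :=
  ∑ k, LinearMap.mulLeft R (e k) ∘ₗ LinearMap.mulRight R (e k)

variable {R : Type*}

@[simp]
lemma sandwich_apply [CommSemiring R] [Semiring A] [Algebra R A] (e : ι → A) (b : A) :
    sandwich R e b = ∑ k, e k * b * e k := by
  simp [sandwich, mul_assoc]

variable [DecidableEq ι] [CommRing R] [Ring A] [Algebra R A] {e : ι → A}

lemma mul_sandwich (he : IsStructuralFamily e) (i : ι) (b : A) :
    e i * sandwich R e b = -sandwich R e (e i * b) - 2 * (b * e i) := by
  have hterm : ∀ k, e i * (e k * b * e k)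
      = (if i = k then -2 else 0) * b * e k - e k * (e i * b) * e k := by
    intro k
    rw [show e i * (e k * b * e k) = e i * e k * b * e k by noncomm_ring,
      eq_sub_of_add_eq (he i k)]
    noncomm_ring
  simp only [sandwich_apply, Finset.mul_sum, hterm, Finset.sum_sub_distrib, ite_mul, zero_mul,
    Finset.sum_ite_eq, Finset.mem_univ, if_true]
  noncomm_ring

lemma sandwich_mul (he : IsStructuralFamily e) (j : ι) (c : A) :
    sandwich R e c * e j = -sandwich R e (c * e j) - 2 * (e j * c) := by
  have hterm : ∀ k, e k * c * e k * e j
      = e k * c * (if k = j then -2 else 0) - e k * (c * e j) * e k := by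
    intro k
    rw [show e k * c * e k * e j = e k * c * (e k * e j) by noncomm_ring,
      eq_sub_of_add_eq (he k j)]
    noncomm_ring
  simp only [sandwich_apply, Finset.sum_mul, hterm, Finset.sum_sub_distrib, mul_ite, mul_zero,
    Finset.sum_ite_eq', Finset.mem_univ, if_true]
  noncomm_ring

lemma mul_sandwich_mul (he : IsStructuralFamily e)
    (i j : ι) (b : A) :
    e i * sandwich R e b * e j
      = sandwich R e (e i * b * e j) + 2 * (e j * e i * b - b * e i * e j) := by
  rw [mul_sandwich he, sub_mul, neg_mul, sandwich_mul he]
  noncomm_ring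

lemma sum_sum_anticomm_mul (he : IsStructuralFamily e)
    {a : ι → ι → A} (ha : ∀ i j, a i j = a j i) :
    ∑ i, ∑ j, e j * e i * a i j + ∑ i, ∑ j, e j * e i * a i j = -2 * ∑ i, a i i := by
  conv_lhs => arg 2; rw [Finset.sum_comm]
  simp only [← Finset.sum_add_distrib, ha _ _, ← add_mul, he _ _, Finset.mul_sum]
  simp

lemma sum_sum_mul_anticomm (he : IsStructuralFamily e)
    {a : ι → ι → A} (ha : ∀ i j, a i j = a j i) :
    ∑ i, ∑ j, a i j * e i * e j + ∑ i, ∑ j, a i j * e i * e j = -2 * ∑ i, a i i := by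
  conv_lhs => arg 2; rw [Finset.sum_comm]
  simp only [← Finset.sum_add_distrib, ha _ _, mul_assoc, ← mul_add, he _ _, Finset.mul_sum]
  simpa using Finset.sum_congr rfl fun i _ => (Commute.ofNat_right (a i i) 2).eq

theorem sum_sum_mul_sandwich_mul (he : IsStructuralFamily e)
    {a : ι → ι → A} (ha : ∀ i j, a i j = a j i) :
    ∑ i, ∑ j, e i * sandwich R e (a i j) * e j = sandwich R e (∑ i, ∑ j, e i * a i j * e j) := by
  simp only [mul_sandwich_mul he, Finset.sum_add_distrib, ← Finset.mul_sum, Finset.sum_sub_distrib,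
    map_sum]
  rw [mul_sub, two_mul, two_mul, sum_sum_anticomm_mul he ha, sum_sum_mul_anticomm he ha, sub_self,
    add_zero]

end Sandwich

lemma pd_clm_comp (L : Cl3 →L[ℝ] Cl3) {g : V3 → Cl3} {x : V3} (hg : DifferentiableAt ℝ g x)
    (i : Fin 3) : pd i (fun y => L (g y)) x = L (pd i g x) := by
  simp only [pd]
  rw [show (fun y => L (g y)) = L ∘ g from rfl, fderiv_comp x L.differentiableAt hg, L.fderiv]
  rfl

lemma ContDiff.differentiable_pd {f : V3 → Cl3} (hf : ContDiff ℝ 2 f) (j : Fin 3) :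
    Differentiable ℝ (pd j f) := fun y =>
  ((hf.fderiv_right (m := 1) (by norm_num)).differentiable (by norm_num) y).clm_apply
    (differentiableAt_const _)

lemma ContDiff.pd_pd_comm {f : V3 → Cl3} (hf : ContDiff ℝ 2 f) (x : V3) (i j : Fin 3) :
    pd i (pd j f) x = pd j (pd i f) x := by
  have hd : DifferentiableAt ℝ (fderiv ℝ f) x :=
    (hf.fderiv_right (m := 1) (by norm_num)).differentiable (by norm_num) x
  have hsecond : ∀ v w : V3,
      fderiv ℝ (fun y => fderiv ℝ f y v) x w = fderiv ℝ (fderiv ℝ f) x w v := fun v w => by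
    rw [fderiv_clm_apply hd (differentiableAt_const v)]
    simp
  show fderiv ℝ (fun y => fderiv ℝ f y (Pi.single j 1)) x (Pi.single i 1)
    = fderiv ℝ (fun y => fderiv ℝ f y (Pi.single i 1)) x (Pi.single j 1)
  rw [hsecond, hsecond]
  exact (hf.contDiffAt.isSymmSndFDerivAt (by norm_num)).eq _ _

lemma ContDiff.pd_pd_clm_comp {f : V3 → Cl3} (hf : ContDiff ℝ 2 f) (L : Cl3 →L[ℝ] Cl3) (x : V3)
    (i j : Fin 3) : pd i (pd j (fun y => L (f y))) x = L (pd i (pd j f) x) := by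
  have hj : pd j (fun y => L (f y)) = fun y => L (pd j f y) :=
    funext fun y => pd_clm_comp L (hf.differentiable (by norm_num) y) j
  rw [hj, pd_clm_comp L (hf.differentiable_pd j x)]

lemma StructuralSet.isStructuralFamily {ψ : Fin 3 → V3} (hψ : StructuralSet ψ) :
    IsStructuralFamily fun i => ι3 (ψ i) := fun i j => by
  rw [hψ i j]
  split_ifs <;> simp [map_ofNat]

/-- the sandwich `ν` commutes with the two-sided Dirac operator:
`ψ∂[ν(f)]ψ∂ = ν(ψ∂ f ψ∂)`. -/
theorem stmt4 (ψ : Fin 3 → V3) (hψ : StructuralSet ψ)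
    (f : V3 → Cl3) (hf : ContDiff ℝ 2 f) :
    ∀ x, DLR ψ ψ (fun y => nu ψ (f y)) x = nu ψ (DLR ψ ψ f x) := by
  intro x
  let ν : Cl3 →L[ℝ] Cl3 := (sandwich ℝ fun i => ι3 (ψ i)).toContinuousLinearMap
  have hν : ∀ a, nu ψ a = ν a := fun a => (sandwich_apply _ a).symm
  simp only [DLR, hν, hf.pd_pd_clm_comp ν x]
  exact sum_sum_mul_sandwich_mul (a := fun i j => pd i (pd j f) x) hψ.isStructuralFamily (hf.pd_pd_comm x)
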